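/- The RPL₀ derivation rules preserve semantic consequence: for each unary rule (∧r₁, ∧r₂, ∧l, ∨r, ∨l₁, ∨l₂, ¬r, ¬l), if the premise sequent is valid in a first-order structure under all variable assignments, then so is the conclusion; and for the resolution rule with most general unifier σ of the resolved atoms, if both variable-disjoint premises are valid in a structure under all assignments, then so is the resolved conclusion Γσ, Πσ ⊢ Δσ, Λσ. -/

import Mathlib

/-! Each unary rule is sound assignment by assignment, by the truth table of its connective.
For resolution, `holds M v (Aθ) ↔ holds M (evalT M v ∘ θ) A` makes validity stable under
substitution; after applying θ to both premises all resolved atoms become one formula, and the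
two instances combine by a cut on it. -/

/- First-order terms. -/
inductive Tm where
  | var (x : ℕ)
  | app (f : ℕ) (ts : List Tm)

/-- Application of a substitution to a term. -/
def applyT (θ : ℕ → Tm) : Tm → Tm
  | .var x => θ x
  | .app f ts => .app f (ts.attach.map fun x => applyT θ x.1)
decreasing_by all_goals (simp_wf; have := List.sizeOf_lt_of_mem x.2; omega)

/- Quantifier-free first-order formulas. -/
inductive Form where
  | atom (P : ℕ) (ts : List Tm)
  | conj (A B : Form)
  | disj (A B : Form)
  | neg (A : Form)

/-- Application of a substitution to a formula. -/
def applyF (θ : ℕ → Tm) : Form → Form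
  | .atom P ts => .atom P (ts.map (applyT θ))
  | .conj A B => .conj (applyF θ A) (applyF θ B)
  | .disj A B => .disj (applyF θ A) (applyF θ B)
  | .neg A => .neg (applyF θ A)

/-- Occurrence of a variable in a term. -/
inductive VarInT (x : ℕ) : Tm → Prop where
  | refl : VarInT x (.var x)
  | inApp {f ts t} : t ∈ ts → VarInT x t → VarInT x (.app f ts)

/-- Occurrence of a variable in a formula. -/
inductive VarInF (x : ℕ) : Form → Prop where
  | inAtom {P ts t} : t ∈ ts → VarInT x t → VarInF x (.atom P ts)
  | conjL {A B} : VarInF x A → VarInF x (.conj A B)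
  | conjR {A B} : VarInF x B → VarInF x (.conj A B)
  | disjL {A B} : VarInF x A → VarInF x (.disj A B)
  | disjR {A B} : VarInF x B → VarInF x (.disj A B)
  | negI {A} : VarInF x A → VarInF x (.neg A)

/-- θ unifies a list of formulas if it identifies them all. -/
def UnifiesL (θ : ℕ → Tm) (As : List Form) : Prop :=
  ∀ A ∈ As, ∀ B ∈ As, applyF θ A = applyF θ B

/-- θ is a most general unifier of a list of formulas. -/
def IsMGUL (θ : ℕ → Tm) (As : List Form) : Prop :=
  UnifiesL θ As ∧ ∀ τ : ℕ → Tm, UnifiesL τ As → ∃ δ : ℕ → Tm, ∀ x, τ x = applyT δ (θ x)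

def IsAtomF : Form → Prop
  | .atom _ _ => True
  | _ => False

/-- Sequents: pairs of multisets of quantifier-free formulas. -/
abbrev Sequent := Multiset Form × Multiset Form

/-- The calculus RPL₀, with axioms taken from a set `Ax` of sequents. -/
inductive Deriv (Ax : Set Sequent) : Sequent → Prop where
  | ax {S} : S ∈ Ax → Deriv Ax S
  | andr1 {Γ Δ A B} : Deriv Ax (Γ, (Form.conj A B) ::ₘ Δ) → Deriv Ax (Γ, A ::ₘ Δ)
  | andr2 {Γ Δ A B} : Deriv Ax (Γ, (Form.conj A B) ::ₘ Δ) → Deriv Ax (Γ, B ::ₘ Δ)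
  | andl {Γ Δ A B} : Deriv Ax ((Form.conj A B) ::ₘ Γ, Δ) → Deriv Ax (A ::ₘ B ::ₘ Γ, Δ)
  | orr {Γ Δ A B} : Deriv Ax (Γ, (Form.disj A B) ::ₘ Δ) → Deriv Ax (Γ, A ::ₘ B ::ₘ Δ)
  | orl1 {Γ Δ A B} : Deriv Ax ((Form.disj A B) ::ₘ Γ, Δ) → Deriv Ax (A ::ₘ Γ, Δ)
  | orl2 {Γ Δ A B} : Deriv Ax ((Form.disj A B) ::ₘ Γ, Δ) → Deriv Ax (B ::ₘ Γ, Δ)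
  | negr {Γ Δ A} : Deriv Ax (Γ, (Form.neg A) ::ₘ Δ) → Deriv Ax (A ::ₘ Γ, Δ)
  | negl {Γ Δ A} : Deriv Ax ((Form.neg A) ::ₘ Γ, Δ) → Deriv Ax (Γ, A ::ₘ Δ)
  | res {Γ Δ Γ₂ Δ₂ : Multiset Form} {As Bs : List Form} {θ : ℕ → Tm}
      (hA : As ≠ []) (hB : Bs ≠ [])
      (hatomA : ∀ A ∈ As, IsAtomF A) (hatomB : ∀ B ∈ Bs, IsAtomF B)
      (hdisj : ∀ x : ℕ, (∃ A ∈ As, VarInF x A) → ¬ ∃ B ∈ Bs, VarInF x B)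
      (hmgu : IsMGUL θ (As ++ Bs))
      (h1 : Deriv Ax (Γ, Δ + ↑As)) (h2 : Deriv Ax (↑Bs + Γ₂, Δ₂)) :
      Deriv Ax ((Γ + Γ₂).map (applyF θ), (Δ + Δ₂).map (applyF θ))

/- First-order structures. -/
structure Str where
  D : Type
  ne : Nonempty D
  fI : ℕ → List D → D
  pI : ℕ → List D → Prop

/-- Evaluation of a term in a structure under a variable assignment. -/
def evalT (M : Str) (v : ℕ → M.D) : Tm → M.D
  | .var x => v x
  | .app f ts => M.fI f (ts.attach.map fun x => evalT M v x.1)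
decreasing_by all_goals (simp_wf; have := List.sizeOf_lt_of_mem x.2; omega)

/-- Satisfaction of a formula. -/
def holds (M : Str) (v : ℕ → M.D) : Form → Prop
  | .atom P ts => M.pI P (ts.map (evalT M v))
  | .conj A B => holds M v A ∧ holds M v B
  | .disj A B => holds M v A ∨ holds M v B
  | .neg A => ¬ holds M v A

/-- A sequent Γ ⊢ Δ is valid in M if for every variable assignment, whenever all
    formulas of Γ hold, some formula of Δ holds (i.e. the universal closure of
    ⋀Γ → ⋁Δ holds). -/
def SeqValid (M : Str) (S : Sequent) : Prop :=
  ∀ v : ℕ → M.D, (∀ A ∈ S.1, holds M v A) → ∃ B ∈ S.2, holds M v B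

theorem evalT_app (M : Str) (v : ℕ → M.D) (f : ℕ) (ts : List Tm) :
    evalT M v (.app f ts) = M.fI f (ts.map (evalT M v)) := by
  rw [evalT, List.attach_map_val]

theorem applyT_app (θ : ℕ → Tm) (f : ℕ) (ts : List Tm) :
    applyT θ (.app f ts) = .app f (ts.map (applyT θ)) := by
  rw [applyT, List.attach_map_val]

theorem evalT_applyT (M : Str) (v : ℕ → M.D) (θ : ℕ → Tm) :
    ∀ t, evalT M v (applyT θ t) = evalT M (fun x => evalT M v (θ x)) t
  | .var x => by rw [applyT, evalT]
  | .app f ts => by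
      rw [applyT_app, evalT_app, evalT_app, List.map_map]
      exact congrArg _ (List.map_congr_left fun t ht => evalT_applyT M v θ t)
decreasing_by simp_wf; have := List.sizeOf_lt_of_mem ht; omega

theorem holds_applyF (M : Str) (v : ℕ → M.D) (θ : ℕ → Tm) :
    ∀ A, holds M v (applyF θ A) ↔ holds M (fun x => evalT M v (θ x)) A
  | .atom P ts => by
      simp only [applyF, holds, List.map_map, Function.comp_def, evalT_applyT]
  | .conj A B | .disj A B => by
      simp only [applyF, holds, holds_applyF M v θ A, holds_applyF M v θ B]
  | .neg A => by
      simp only [applyF, holds, holds_applyF M v θ A]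

def SeqHolds (M : Str) (v : ℕ → M.D) (S : Sequent) : Prop :=
  (∀ A ∈ S.1, holds M v A) → ∃ B ∈ S.2, holds M v B

namespace SeqValid

variable {M : Str}

theorem of_seqHolds_imp {S T : Sequent} (hST : ∀ v, SeqHolds M v S → SeqHolds M v T)
    (hS : SeqValid M S) : SeqValid M T :=
  fun v => hST v (hS v)

theorem map_applyF {S : Sequent} (θ : ℕ → Tm) (hS : SeqValid M S) :
    SeqValid M (S.1.map (applyF θ), S.2.map (applyF θ)) := by
  intro v hv
  rw [Multiset.forall_mem_map_iff] at hv
  obtain ⟨B, hB, hBv⟩ := hS _ fun A hA => (holds_applyF M v θ A).1 (hv A hA)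
  exact ⟨applyF θ B, Multiset.mem_map_of_mem _ hB, (holds_applyF M v θ B).2 hBv⟩

theorem cut {Γ Δ Γ₂ Δ₂ As Bs : Multiset Form} (hAB : ∀ A ∈ As, ∀ B ∈ Bs, A = B)
    (h₁ : SeqValid M (Γ, Δ + As)) (h₂ : SeqValid M (Bs + Γ₂, Δ₂)) :
    SeqValid M (Γ + Γ₂, Δ + Δ₂) := by
  intro v hv
  simp only [Multiset.mem_add, or_imp, forall_and] at hv
  obtain ⟨C, hC, hCv⟩ := h₁ v hv.1
  rcases Multiset.mem_add.1 hC with hCΔ | hCAs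
  · exact ⟨C, Multiset.mem_add.2 (.inl hCΔ), hCv⟩
  · have hBs : ∀ B ∈ Bs, holds M v B := fun B hB => hAB C hCAs B hB ▸ hCv
    obtain ⟨D, hD, hDv⟩ := h₂ v fun B hB => (Multiset.mem_add.1 hB).elim (hBs B) (hv.2 B)
    exact ⟨D, Multiset.mem_add.2 (.inr hD), hDv⟩

section UnaryRules

variable {Γ Δ : Multiset Form} {A B : Form}

theorem andr1 : SeqValid M (Γ, Form.conj A B ::ₘ Δ) → SeqValid M (Γ, A ::ₘ Δ) :=
  of_seqHolds_imp fun v => by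
    simp only [SeqHolds, Multiset.mem_cons, exists_eq_or_imp, holds]; tauto

theorem andr2 : SeqValid M (Γ, Form.conj A B ::ₘ Δ) → SeqValid M (Γ, B ::ₘ Δ) :=
  of_seqHolds_imp fun v => by
    simp only [SeqHolds, Multiset.mem_cons, exists_eq_or_imp, holds]; tauto

theorem andl : SeqValid M (Form.conj A B ::ₘ Γ, Δ) → SeqValid M (A ::ₘ B ::ₘ Γ, Δ) :=
  of_seqHolds_imp fun v => by
    simp only [SeqHolds, Multiset.mem_cons, forall_eq_or_imp, holds]; tauto

theorem orr : SeqValid M (Γ, Form.disj A B ::ₘ Δ) → SeqValid M (Γ, A ::ₘ B ::ₘ Δ) :=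
  of_seqHolds_imp fun v => by
    simp only [SeqHolds, Multiset.mem_cons, exists_eq_or_imp, holds]; tauto

theorem orl1 : SeqValid M (Form.disj A B ::ₘ Γ, Δ) → SeqValid M (A ::ₘ Γ, Δ) :=
  of_seqHolds_imp fun v => by
    simp only [SeqHolds, Multiset.mem_cons, forall_eq_or_imp, holds]; tauto

theorem orl2 : SeqValid M (Form.disj A B ::ₘ Γ, Δ) → SeqValid M (B ::ₘ Γ, Δ) :=
  of_seqHolds_imp fun v => by
    simp only [SeqHolds, Multiset.mem_cons, forall_eq_or_imp, holds]; tauto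

theorem negr : SeqValid M (Γ, Form.neg A ::ₘ Δ) → SeqValid M (A ::ₘ Γ, Δ) :=
  of_seqHolds_imp fun v => by
    simp only [SeqHolds, Multiset.mem_cons, forall_eq_or_imp, exists_eq_or_imp, holds]; tauto

theorem negl : SeqValid M (Form.neg A ::ₘ Γ, Δ) → SeqValid M (Γ, A ::ₘ Δ) :=
  of_seqHolds_imp fun v => by
    simp only [SeqHolds, Multiset.mem_cons, forall_eq_or_imp, exists_eq_or_imp, holds]; tauto

end UnaryRules

theorem res {Γ Δ Γ₂ Δ₂ : Multiset Form} {As Bs : List Form} {θ : ℕ → Tm}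
    (hθ : UnifiesL θ (As ++ Bs)) (h₁ : SeqValid M (Γ, Δ + ↑As))
    (h₂ : SeqValid M (↑Bs + Γ₂, Δ₂)) :
    SeqValid M ((Γ + Γ₂).map (applyF θ), (Δ + Δ₂).map (applyF θ)) := by
  have hAB : ∀ A ∈ (As : Multiset Form).map (applyF θ),
      ∀ B ∈ (Bs : Multiset Form).map (applyF θ), A = B := by
    simp only [Multiset.forall_mem_map_iff, Multiset.mem_coe]
    exact fun A hA B hB => hθ A (List.mem_append_left _ hA) B (List.mem_append_right _ hB)
  rw [Multiset.map_add, Multiset.map_add]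
  refine cut hAB ?_ ?_
  · simpa only [Multiset.map_add] using h₁.map_applyF θ
  · simpa only [Multiset.map_add] using h₂.map_applyF θ

end SeqValid

/-- the RPL₀ rules preserve semantic consequence. For every structure M:
    each unary rule (∧r₁, ∧r₂, ∧l, ∨r, ∨l₁, ∨l₂, ¬r, ¬l) turns a sequent valid under
    all assignments into a valid sequent; and for the resolution rule with m.g.u. σ of
    the resolved atoms and variable-disjoint premises, validity of both premises
    implies validity of the resolved conclusion. -/
theorem rpl0_rules_preserve_validity (M : Str) :
    (∀ (Γ Δ : Multiset Form) (A B : Form),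
      SeqValid M (Γ, (Form.conj A B) ::ₘ Δ) → SeqValid M (Γ, A ::ₘ Δ)) ∧
    (∀ (Γ Δ : Multiset Form) (A B : Form),
      SeqValid M (Γ, (Form.conj A B) ::ₘ Δ) → SeqValid M (Γ, B ::ₘ Δ)) ∧
    (∀ (Γ Δ : Multiset Form) (A B : Form),
      SeqValid M ((Form.conj A B) ::ₘ Γ, Δ) → SeqValid M (A ::ₘ B ::ₘ Γ, Δ)) ∧
    (∀ (Γ Δ : Multiset Form) (A B : Form),
      SeqValid M (Γ, (Form.disj A B) ::ₘ Δ) → SeqValid M (Γ, A ::ₘ B ::ₘ Δ)) ∧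
    (∀ (Γ Δ : Multiset Form) (A B : Form),
      SeqValid M ((Form.disj A B) ::ₘ Γ, Δ) → SeqValid M (A ::ₘ Γ, Δ)) ∧
    (∀ (Γ Δ : Multiset Form) (A B : Form),
      SeqValid M ((Form.disj A B) ::ₘ Γ, Δ) → SeqValid M (B ::ₘ Γ, Δ)) ∧
    (∀ (Γ Δ : Multiset Form) (A : Form),
      SeqValid M (Γ, (Form.neg A) ::ₘ Δ) → SeqValid M (A ::ₘ Γ, Δ)) ∧
    (∀ (Γ Δ : Multiset Form) (A : Form),
      SeqValid M ((Form.neg A) ::ₘ Γ, Δ) → SeqValid M (Γ, A ::ₘ Δ)) ∧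
    (∀ (Γ Δ Γ₂ Δ₂ : Multiset Form) (As Bs : List Form) (θ : ℕ → Tm),
      As ≠ [] → Bs ≠ [] →
      (∀ A ∈ As, IsAtomF A) → (∀ B ∈ Bs, IsAtomF B) →
      (∀ x : ℕ, (∃ A ∈ As, VarInF x A) → ¬ ∃ B ∈ Bs, VarInF x B) →
      IsMGUL θ (As ++ Bs) →
      SeqValid M (Γ, Δ + ↑As) → SeqValid M (↑Bs + Γ₂, Δ₂) →
      SeqValid M ((Γ + Γ₂).map (applyF θ), (Δ + Δ₂).map (applyF θ))) :=
  ⟨fun _ _ _ _ => SeqValid.andr1, fun _ _ _ _ => SeqValid.andr2,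
   fun _ _ _ _ => SeqValid.andl, fun _ _ _ _ => SeqValid.orr, fun _ _ _ _ => SeqValid.orl1,
   fun _ _ _ _ => SeqValid.orl2, fun _ _ _ => SeqValid.negr, fun _ _ _ => SeqValid.negl,
   fun _ _ _ _ _ _ _ _ _ _ _ _ hmgu => SeqValid.res hmgu.1⟩
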